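/- The spherical logarithmic map inverts the spherical exponential map: on the hypersphere of curvature K > 0, if y = exp_x(v) for a nonzero tangent vector v at x with ‖v‖₂ < πR, then log_x(y) := (arccos(α)/√(1-α²))·(y - αx) with α = K⟨x,y⟩ equals v. -/

import Mathlib

/-- Exponential map on the hypersphere of radius `R`. -/
noncomputable def sphExp {n : ℕ} (R : ℝ) (x v : EuclideanSpace ℝ (Fin (n + 1))) :
    EuclideanSpace ℝ (Fin (n + 1)) :=
  Real.cos (‖v‖ / R) • x + (Real.sin (‖v‖ / R) * R / ‖v‖) • v

/-- Logarithmic map on the hypersphere of curvature `K`. -/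
noncomputable def sphLog {n : ℕ} (K : ℝ) (x y : EuclideanSpace ℝ (Fin (n + 1))) :
    EuclideanSpace ℝ (Fin (n + 1)) :=
  (Real.arccos (K * (inner ℝ x y : ℝ)) / Real.sqrt (1 - (K * (inner ℝ x y : ℝ)) ^ 2)) •
    (y - (K * (inner ℝ x y : ℝ)) • x)

/-!
With `θ = ‖v‖ / R` and `K R² = 1`, tangency gives `K ⟪x, exp_x v⟫ = cos θ`. As `θ ∈ (0, π)`,
`arccos (cos θ) = θ` and `√(1 - cos² θ) = sin θ`, while `exp_x v - cos θ • x = (R sin θ / ‖v‖) • v`;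
the scalars `θ / sin θ` and `R sin θ / ‖v‖` multiply to `1`.
-/

open Real

theorem Real.arccos_cos_div_sqrt_one_sub_cos_sq {θ : ℝ} (h₀ : 0 ≤ θ) (hπ : θ ≤ π) :
    arccos (cos θ) / √(1 - cos θ ^ 2) = θ / sin θ := by
  rw [← sin_sq, sqrt_sq (sin_nonneg_of_nonneg_of_le_pi h₀ hπ), arccos_cos h₀ hπ]

section Sphere

variable {n : ℕ}

theorem sphLog_of_mul_inner_eq_cos {K θ : ℝ} {x y : EuclideanSpace ℝ (Fin (n + 1))}
    (hα : K * inner ℝ x y = cos θ) (h₀ : 0 ≤ θ) (hπ : θ ≤ π) :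
    sphLog K x y = (θ / sin θ) • (y - cos θ • x) := by
  rw [sphLog, hα, arccos_cos_div_sqrt_one_sub_cos_sq h₀ hπ]

theorem inner_sphExp_of_inner_eq_zero {R : ℝ} {x v : EuclideanSpace ℝ (Fin (n + 1))}
    (hxv : inner ℝ x v = 0) : inner ℝ x (sphExp R x v) = cos (‖v‖ / R) * ‖x‖ ^ 2 := by
  rw [sphExp, inner_add_right, inner_smul_right, inner_smul_right, hxv,
    real_inner_self_eq_norm_sq, mul_zero, add_zero]

theorem sphExp_sub_cos_smul (R : ℝ) (x v : EuclideanSpace ℝ (Fin (n + 1))) :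
    sphExp R x v - cos (‖v‖ / R) • x = (sin (‖v‖ / R) * R / ‖v‖) • v :=
  add_sub_cancel_left _ _

end Sphere

/-- The spherical logarithmic map inverts the spherical exponential map. -/
theorem sphLog_sphExp {n : ℕ} (K : ℝ) (hK : 0 < K)
    (R : ℝ) (hR : R = 1 / Real.sqrt K)
    (x v : EuclideanSpace ℝ (Fin (n + 1)))
    (hx : ‖x‖ ^ 2 = R ^ 2) (hxv : (inner ℝ x v : ℝ) = 0)
    (hv : 0 < ‖v‖) (hv' : ‖v‖ < Real.pi * R) :
    sphLog K x (sphExp R x v) = v := by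
  have hR₀ : 0 < R := by rw [hR]; positivity
  have hKR : K * R ^ 2 = 1 := by
    rw [hR, div_pow, sq_sqrt hK.le]; field_simp
  have hθ₀ : 0 < ‖v‖ / R := div_pos hv hR₀
  have hθπ : ‖v‖ / R < π := (div_lt_iff₀ hR₀).2 hv'
  have hα : K * inner ℝ x (sphExp R x v) = cos (‖v‖ / R) := by
    rw [inner_sphExp_of_inner_eq_zero hxv, hx, mul_left_comm, hKR, mul_one]
  have hsin : sin (‖v‖ / R) ≠ 0 := (sin_pos_of_pos_of_lt_pi hθ₀ hθπ).ne'
  rw [sphLog_of_mul_inner_eq_cos hα hθ₀.le hθπ.le, sphExp_sub_cos_smul, smul_smul]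
  convert one_smul ℝ v
  field_simp
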